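/- Assign to the variables the weights wt(α) = 1, wt(β) = 2, wt(γ) = 3. Then for every k ≥ 0 the coefficient φ_k of Φ is a weighted-homogeneous polynomial of weighted degree k; consequently, for every g ≥ 1, f_1^g, f_2^g, f_3^g are weighted-homogeneous polynomials of weighted degrees g, g+1, g+2 respectively. -/

import Mathlib

noncomputable section

open PowerSeries

/-- The polynomial ring `ℚ[α,β,γ]`. -/
abbrev R3 : Type := MvPolynomial (Fin 3) ℚ

/-- The fraction field `K = ℚ(α,β,γ)`. -/
abbrev K3 : Type := FractionRing R3

/-- The image of `α` in `K`. -/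
def al : K3 := algebraMap R3 K3 (MvPolynomial.X 0)
/-- The image of `β` in `K`. -/
def be : K3 := algebraMap R3 K3 (MvPolynomial.X 1)
/-- The image of `γ` in `K`. -/
def ga : K3 := algebraMap R3 K3 (MvPolynomial.X 2)

/-- The binomial series `(1 - β t²)^{-1/2} = ∑_{n≥0} C(2n,n) (β t²/4)^n`. -/
def Sq : PowerSeries K3 :=
  PowerSeries.mk fun k => if k % 2 = 0 then
    ((k.choose (k / 2) : ℚ) : K3) * (be / 4) ^ (k / 2) else 0

/-- The exponent `E(t) = α t + (α + 2γ/β) ∑_{m≥1} β^m t^{2m+1}/(2m+1)`;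
its coefficient in degree `k = 2m+1 ≥ 3` is `(α + 2γ/β) β^{(k-1)/2} / k`. -/
def Ex : PowerSeries K3 :=
  PowerSeries.mk fun k =>
    if k = 1 then al
    else if k % 2 = 1 then (al + 2 * ga / be) * be ^ ((k - 1) / 2) / (k : K3)
    else 0

/-- The formal exponential `exp E = ∑_n E^n/n!` of the power series `E`
(which has zero constant term, so each coefficient is a finite sum). -/
def ExpEx : PowerSeries K3 :=
  PowerSeries.mk fun k =>
    ∑ n ∈ Finset.range (k + 1), PowerSeries.coeff k (Ex ^ n) / (n.factorial : K3)

/-- The generating function `Φ(t) = (1 - βt²)^{-1/2} exp(E(t))`. -/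
def Phi : PowerSeries K3 := Sq * ExpEx

/-- `φ_k`, the `k`-th coefficient of `Φ`. -/
def phi (k : ℕ) : K3 := PowerSeries.coeff k Phi

/-- `Φ^{(r)} = r! φ_r`, the `r`-th formal derivative of `Φ` at `t = 0`. -/
def PhiD (r : ℕ) : K3 := (r.factorial : K3) * phi r

/-- `f_1^g := Φ^{(g)}`. -/
def f1 (g : ℕ) : K3 := PhiD g
/-- `f_2^g := (1/g²)(Φ^{(g+1)} - α Φ^{(g)})`. -/
def f2 (g : ℕ) : K3 := (1 / (g : K3) ^ 2) * (PhiD (g + 1) - al * PhiD g)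
/-- `f_3^g := (1/(2g(g+1)))(Φ^{(g+2)} - α Φ^{(g+1)} - (g+1)² β Φ^{(g)})`. -/
def f3 (g : ℕ) : K3 :=
  (1 / (2 * (g : K3) * ((g : K3) + 1))) *
    (PhiD (g + 2) - al * PhiD (g + 1) - ((g : K3) + 1) ^ 2 * be * PhiD g)


-- ===== auxiliary development =====

lemma w0 : (![1,2,3] : Fin 3 → ℕ) 0 = 1 := rfl
lemma w1 : (![1,2,3] : Fin 3 → ℕ) 1 = 2 := rfl
lemma w2 : (![1,2,3] : Fin 3 → ℕ) 2 = 3 := rfl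

/-- `x ∈ K3` has weight `k` if `x β^M` is the image of a weighted-homogeneous
polynomial of weighted degree `k + 2M` for some `M`. -/
def Wt (k : ℕ) (x : K3) : Prop :=
  ∃ M : ℕ, ∃ q : R3, q.IsWeightedHomogeneous ![1,2,3] (k + 2*M) ∧
    x * be ^ M = algebraMap R3 K3 q

lemma WH_congr {q : R3} {a b : ℕ} (h : a = b)
    (hq : q.IsWeightedHomogeneous ![1,2,3] a) :
    q.IsWeightedHomogeneous ![1,2,3] b := h ▸ hq

lemma WH_X1_pow (M : ℕ) :
    ((MvPolynomial.X 1 : R3) ^ M).IsWeightedHomogeneous ![1,2,3] (2*M) := by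
  rw [MvPolynomial.X_pow_eq_monomial]
  apply MvPolynomial.isWeightedHomogeneous_monomial
  rw [Finsupp.weight_apply, Finsupp.sum_single_index (by simp), w1, smul_eq_mul]
  ring

lemma Wt_zero (k : ℕ) : Wt k 0 :=
  ⟨0, 0, MvPolynomial.isWeightedHomogeneous_zero _ _ _, by simp⟩

lemma Wt_algebraMap {k : ℕ} {q : R3} (hq : q.IsWeightedHomogeneous ![1,2,3] k) :
    Wt k (algebraMap R3 K3 q) := ⟨0, q, by simpa using hq, by simp⟩

lemma Wt_add {k : ℕ} {x y : K3} (hx : Wt k x) (hy : Wt k y) : Wt k (x + y) := by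
  obtain ⟨M1, q1, h1, e1⟩ := hx
  obtain ⟨M2, q2, h2, e2⟩ := hy
  refine ⟨M1 + M2, q1 * MvPolynomial.X 1 ^ M2 + q2 * MvPolynomial.X 1 ^ M1, ?_, ?_⟩
  · apply MvPolynomial.IsWeightedHomogeneous.add
    · exact WH_congr (by ring) (h1.mul (WH_X1_pow M2))
    · exact WH_congr (by ring) (h2.mul (WH_X1_pow M1))
  · have hb : be ^ (M1 + M2) = be ^ M1 * be ^ M2 := pow_add _ _ _
    rw [map_add, map_mul, map_mul, map_pow, map_pow, ← e1, ← e2, hb,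
      show algebraMap R3 K3 (MvPolynomial.X 1) = be from rfl]
    ring

lemma Wt_mul {a b : ℕ} {x y : K3} (hx : Wt a x) (hy : Wt b y) : Wt (a + b) (x * y) := by
  obtain ⟨M1, q1, h1, e1⟩ := hx
  obtain ⟨M2, q2, h2, e2⟩ := hy
  refine ⟨M1 + M2, q1 * q2, WH_congr (by ring) (h1.mul h2), ?_⟩
  rw [map_mul, ← e1, ← e2, pow_add]
  ring

lemma Wt_ratMul {k : ℕ} {x : K3} (c : ℚ) (hx : Wt k x) :
    Wt k (algebraMap ℚ K3 c * x) := by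
  obtain ⟨M, q, h, e⟩ := hx
  refine ⟨M, MvPolynomial.C c * q,
    WH_congr (by ring) ((MvPolynomial.isWeightedHomogeneous_C _ c).mul h), ?_⟩
  rw [map_mul, ← e, ← MvPolynomial.algebraMap_eq,
    ← IsScalarTower.algebraMap_apply ℚ R3 K3]
  ring

lemma Wt_neg {k : ℕ} {x : K3} (hx : Wt k x) : Wt k (-x) := by
  have := Wt_ratMul (-1) hx
  simpa using this

lemma Wt_sub {k : ℕ} {x y : K3} (hx : Wt k x) (hy : Wt k y) : Wt k (x - y) := by
  simpa [sub_eq_add_neg] using Wt_add hx (Wt_neg hy)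

lemma Wt_sum {k : ℕ} {ι : Type*} {s : Finset ι} {f : ι → K3}
    (h : ∀ i ∈ s, Wt k (f i)) : Wt k (∑ i ∈ s, f i) :=
  Finset.sum_induction f (Wt k) (fun _ _ => Wt_add) (Wt_zero k) h

lemma Wt_natDiv {k : ℕ} {x : K3} (n : ℕ) (hx : Wt k x) : Wt k (x / (n : K3)) := by
  have h1 : (n : K3) = algebraMap ℚ K3 (n : ℚ) := by
    rw [map_natCast]
  rw [div_eq_inv_mul, h1, ← map_inv₀]
  exact Wt_ratMul _ hx

lemma Wt_extract {k : ℕ} {x : K3} {p : R3} (h : Wt k x)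
    (hp : algebraMap R3 K3 p = x) : p.IsWeightedHomogeneous ![1,2,3] k := by
  obtain ⟨M, q, hq, e⟩ := h
  have hinj : Function.Injective (algebraMap R3 K3) := IsFractionRing.injective R3 K3
  have key : p * MvPolynomial.X 1 ^ M = q := by
    apply hinj
    rw [map_mul, map_pow, hp]
    exact e
  intro d hd
  have hc : MvPolynomial.coeff (d + Finsupp.single 1 M) (p * MvPolynomial.X 1 ^ M)
      = MvPolynomial.coeff d p := by
    rw [MvPolynomial.X_pow_eq_monomial, MvPolynomial.coeff_mul_monomial, mul_one]
  rw [key] at hc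
  have hw := hq (d := d + Finsupp.single 1 M) (by rw [hc]; exact hd)
  rw [map_add] at hw
  have hs : Finsupp.weight ![1,2,3] (Finsupp.single (1 : Fin 3) M) = 2 * M := by
    rw [Finsupp.weight_apply, Finsupp.sum_single_index (by simp), w1, smul_eq_mul]
    ring
  rw [hs] at hw
  omega

lemma Wt_al : Wt 1 al := Wt_algebraMap (by
  have := MvPolynomial.isWeightedHomogeneous_X ℚ ![1,2,3] (0 : Fin 3)
  rwa [w0] at this)

lemma Wt_be : Wt 2 be := Wt_algebraMap (by
  have := MvPolynomial.isWeightedHomogeneous_X ℚ ![1,2,3] (1 : Fin 3)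
  rwa [w1] at this)

lemma Wt_be_pow (m : ℕ) : Wt (2*m) (be ^ m) := by
  have : be ^ m = algebraMap R3 K3 ((MvPolynomial.X 1) ^ m) := by rw [map_pow]; rfl
  rw [this]
  exact Wt_algebraMap (WH_X1_pow m)

lemma ratCast_eq (c : ℚ) : (c : K3) = algebraMap ℚ K3 c := (eq_ratCast (algebraMap ℚ K3) c).symm

lemma Wt_coeff_Sq (k : ℕ) : Wt k (PowerSeries.coeff k Sq) := by
  rw [Sq, PowerSeries.coeff_mk]
  split
  · rename_i he
    have h4 : (be / 4) ^ (k/2) = algebraMap ℚ K3 ((1/4)^(k/2)) * be ^ (k/2) := by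
      rw [map_pow, ← mul_pow]
      congr 1
      rw [div_eq_inv_mul]
      congr 1
      rw [map_div₀, map_one]
      norm_num
    rw [h4, ratCast_eq]
    have hb : Wt k (be ^ (k/2)) := by
      have := Wt_be_pow (k/2)
      rwa [show 2 * (k/2) = k by omega] at this
    exact Wt_ratMul _ (Wt_ratMul _ hb)
  · exact Wt_zero k

lemma be_ne : be ≠ 0 := by
  intro h
  have hinj := IsFractionRing.injective R3 K3
  refine MvPolynomial.X_ne_zero (R := ℚ) 1 (hinj ?_)
  rw [map_zero]
  exact h

lemma Wt_coeff_Ex (k : ℕ) : Wt k (PowerSeries.coeff k Ex) := by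
  rw [Ex, PowerSeries.coeff_mk]
  split
  · rename_i h; subst h; exact Wt_al
  split
  · rename_i h1 h2
    set m := (k - 1) / 2 with hm
    have hk : k = 2 * m + 1 := by omega
    apply Wt_natDiv
    refine ⟨1, (MvPolynomial.X 0 * MvPolynomial.X 1
      + MvPolynomial.C 2 * MvPolynomial.X 2) * MvPolynomial.X 1 ^ m, ?_, ?_⟩
    · have hA : (MvPolynomial.X 0 * MvPolynomial.X 1 : R3).IsWeightedHomogeneous ![1,2,3] 3 := by
        have := (MvPolynomial.isWeightedHomogeneous_X ℚ ![1,2,3] 0).mul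
          (MvPolynomial.isWeightedHomogeneous_X ℚ ![1,2,3] 1)
        rw [w0, w1] at this
        exact WH_congr (by norm_num) this
      have hB : (MvPolynomial.C 2 * MvPolynomial.X 2 : R3).IsWeightedHomogeneous ![1,2,3] 3 := by
        have := (MvPolynomial.isWeightedHomogeneous_C ![1,2,3] (2:ℚ)).mul
          (MvPolynomial.isWeightedHomogeneous_X ℚ ![1,2,3] 2)
        rw [w2] at this
        exact WH_congr (by norm_num) this
      exact WH_congr (by omega) ((hA.add hB).mul (WH_X1_pow m))
    · rw [pow_one]
      have key : (al + 2 * ga / be) * be ^ m * be = (al * be + 2 * ga) * be ^ m := by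
        have hb := be_ne
        field_simp
      rw [key]
      simp only [map_mul, map_add, map_pow, map_ofNat]
      rfl
  · exact Wt_zero k

lemma Wt_congr {a b : ℕ} {x : K3} (h : a = b) (hx : Wt a x) : Wt b x := h ▸ hx

lemma Wt_one : Wt 0 (1 : K3) := by
  have := Wt_algebraMap (MvPolynomial.isWeightedHomogeneous_one ℚ (M := ℕ) ![1,2,3])
  rwa [map_one] at this

lemma Wt_natMul {k : ℕ} {x : K3} (n : ℕ) (hx : Wt k x) : Wt k ((n : K3) * x) := by
  have h1 : (n : K3) = algebraMap ℚ K3 (n : ℚ) := by rw [map_natCast]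
  rw [h1]
  exact Wt_ratMul _ hx

lemma Wt_coeff_pow (n : ℕ) : ∀ k, Wt k (PowerSeries.coeff k (Ex ^ n)) := by
  induction n with
  | zero =>
    intro k
    rw [pow_zero, PowerSeries.coeff_one]
    split
    · rename_i h; subst h; exact Wt_one
    · exact Wt_zero k
  | succ n ih =>
    intro k
    rw [pow_succ, PowerSeries.coeff_mul]
    apply Wt_sum
    intro p hp
    exact Wt_congr (Finset.HasAntidiagonal.mem_antidiagonal.mp hp) (Wt_mul (ih p.1) (Wt_coeff_Ex p.2))

lemma Wt_coeff_ExpEx (k : ℕ) : Wt k (PowerSeries.coeff k ExpEx) := by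
  rw [ExpEx, PowerSeries.coeff_mk]
  exact Wt_sum fun n _ => Wt_natDiv _ (Wt_coeff_pow n k)

lemma Wt_phi (k : ℕ) : Wt k (phi k) := by
  rw [phi, Phi, PowerSeries.coeff_mul]
  apply Wt_sum
  intro p hp
  exact Wt_congr (Finset.HasAntidiagonal.mem_antidiagonal.mp hp) (Wt_mul (Wt_coeff_Sq p.1) (Wt_coeff_ExpEx p.2))

lemma Wt_PhiD (r : ℕ) : Wt r (PhiD r) := Wt_natMul _ (Wt_phi r)

-- ===== end auxiliary development =====

/-- With weights `wt α = 1`, `wt β = 2`, `wt γ = 3`, every coefficient `φ_k`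
is weighted-homogeneous of weighted degree `k`; consequently, for `g ≥ 1`,
`f_1^g, f_2^g, f_3^g` are weighted-homogeneous of weighted degrees
`g, g+1, g+2` respectively. -/
theorem statement5 :
    (∀ (k : ℕ) (p : R3), algebraMap R3 K3 p = phi k →
      p.IsWeightedHomogeneous ![1, 2, 3] k) ∧
    ∀ g : ℕ, 1 ≤ g → ∀ F1 F2 F3 : R3,
      algebraMap R3 K3 F1 = f1 g → algebraMap R3 K3 F2 = f2 g →
      algebraMap R3 K3 F3 = f3 g →
      F1.IsWeightedHomogeneous ![1, 2, 3] g ∧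
        F2.IsWeightedHomogeneous ![1, 2, 3] (g + 1) ∧
          F3.IsWeightedHomogeneous ![1, 2, 3] (g + 2) := by
  constructor
  · intro k p hp
    exact Wt_extract (Wt_phi k) hp
  · intro g hg F1 F2 F3 h1 h2 h3
    refine ⟨Wt_extract (Wt_PhiD g) h1, Wt_extract ?_ h2, Wt_extract ?_ h3⟩
    · rw [f2] at h2 ⊢
      have e : (1 / (g : K3) ^ 2) * (PhiD (g + 1) - al * PhiD g)
          = (PhiD (g + 1) - al * PhiD g) / ((g ^ 2 : ℕ) : K3) := by
        push_cast
        ring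
      rw [e]
      exact Wt_natDiv _ (Wt_sub (Wt_PhiD (g + 1))
        (Wt_congr (by ring) (Wt_mul Wt_al (Wt_PhiD g))))
    · rw [f3] at h3 ⊢
      have e : (1 / (2 * (g : K3) * ((g : K3) + 1))) *
            (PhiD (g + 2) - al * PhiD (g + 1) - ((g : K3) + 1) ^ 2 * be * PhiD g)
          = (PhiD (g + 2) - al * PhiD (g + 1) - ((g : K3) + 1) ^ 2 * be * PhiD g)
            / ((2 * g * (g + 1) : ℕ) : K3) := by
        push_cast
        ring
      rw [e]
      apply Wt_natDiv
      apply Wt_sub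
      · exact Wt_sub (Wt_PhiD (g + 2))
          (Wt_congr (by ring) (Wt_mul Wt_al (Wt_PhiD (g + 1))))
      · have e2 : ((g : K3) + 1) ^ 2 * be * PhiD g
            = (((g + 1) ^ 2 : ℕ) : K3) * (be * PhiD g) := by
          push_cast
          ring
        rw [e2]
        exact Wt_natMul _ (Wt_congr (by ring) (Wt_mul Wt_be (Wt_PhiD g)))
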